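/- arXiv:1001.2873 — 6 statements merged into one kernel-verified Lean document; each statement's English description precedes it below -/
import Mathlib

section
/- Let $F$ be a finite field with $q$ elements and $f \in F[x_1,\dots,x_n]$ a nonzero polynomial. Then the number of solutions of $f(x_1,\dots,x_n)=0$ in $F^n$ is at most $(\deg f)\, q^{n-1}$. -/
open Finset

namespace MvPolynomial

theorem card_zeros_mul_card_le {R : Type*} [CommRing R] [IsDomain R] [Fintype R] {n : ℕ}
    {p : MvPolynomial (Fin n) R} (hp : p ≠ 0) :
    Nat.card {x : Fin n → R // eval x p = 0} * Fintype.card R ≤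
      p.totalDegree * Fintype.card R ^ n := by
  classical
  have hq : (0 : ℚ≥0) < Fintype.card R := by exact_mod_cast Fintype.card_pos
  have hsz := schwartz_zippel_totalDegree hp (univ : Finset R)
  rw [Fintype.piFinset_univ, card_univ, div_le_div_iff₀ (by positivity) hq] at hsz
  rw [Nat.card_eq_fintype_card, Fintype.card_subtype]
  exact_mod_cast hsz

end MvPolynomial

theorem stmt_1 (F : Type*) [Field F] [Fintype F] (n : ℕ)
    (f : MvPolynomial (Fin n) F) (hf : f ≠ 0) :
    Nat.card {x : Fin n → F // MvPolynomial.eval x f = 0} ≤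
      f.totalDegree * Fintype.card F ^ (n - 1) := by
  have hq : 0 < Fintype.card F := Fintype.card_pos
  refine Nat.le_of_mul_le_mul_right ?_ hq
  calc Nat.card {x : Fin n → F // MvPolynomial.eval x f = 0} * Fintype.card F
      ≤ f.totalDegree * Fintype.card F ^ n := MvPolynomial.card_zeros_mul_card_le hf
    _ ≤ f.totalDegree * (Fintype.card F ^ (n - 1) * Fintype.card F) := by
      rw [← pow_succ]
      exact Nat.mul_le_mul_left _ (Nat.pow_le_pow_right hq (by omega))
    _ = f.totalDegree * Fintype.card F ^ (n - 1) * Fintype.card F := (mul_assoc ..).symm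
end

section
/- Let $R$ be a commutative ring, $A$ an associative unital $R$-algebra that is finitely generated as an $R$-module, and suppose there is no $R$-algebra homomorphism from $A$ onto $R/I$ for any proper ideal $I$ of $R$. Then any subset of $A$ which generates $A$ as an $R$-algebra also strongly generates $A$, i.e., the monomials of positive degree in the generators already span $A$ as an $R$-module. -/
theorem stmt_3 {R A : Type*} [CommRing R] [Ring A] [Algebra R A] [Module.Finite R A]
    (h : ∀ (I : Ideal R), I ≠ ⊤ → ∀ f : A →ₐ[R] R ⧸ I, ¬ Function.Surjective f)
    (S : Set A) (hS : Algebra.adjoin R S = ⊤) :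
    Submodule.span R
      {x : A | ∃ l : List A, l ≠ [] ∧ (∀ y ∈ l, y ∈ S) ∧ l.prod = x} = ⊤ := by
  set T : Set A := {x : A | ∃ l : List A, l ≠ [] ∧ (∀ y ∈ l, y ∈ S) ∧ l.prod = x} with hT
  set M : Submodule R A := Submodule.span R T with hM
  -- T is multiplicatively closed
  have hTT : ∀ x ∈ T, ∀ y ∈ T, x * y ∈ T := by
    rintro x ⟨l, hl, hls, rfl⟩ y ⟨l', hl', hls', rfl⟩
    refine ⟨l ++ l', by simp [hl], ?_, by simp⟩
    intro z hz
    rcases List.mem_append.mp hz with h' | h'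
    exacts [hls _ h', hls' _ h']
  -- span of T ∪ {1} is everything
  have hspan : Submodule.span R (insert (1:A) T) = ⊤ := by
    rw [eq_top_iff]
    have h1 : (Submonoid.closure S : Set A) ⊆ insert (1:A) T := by
      intro x hx
      obtain ⟨l, hls, hprod⟩ := Submonoid.exists_list_of_mem_closure hx
      rcases eq_or_ne l [] with rfl | hl
      · simp at hprod; exact Or.inl hprod.symm
      · exact Or.inr ⟨l, hl, hls, hprod⟩
    calc (⊤ : Submodule R A) = Subalgebra.toSubmodule (Algebra.adjoin R S) := by
          rw [hS]; rfl
      _ = Submodule.span R (Submonoid.closure S : Set A) := Algebra.adjoin_eq_span R S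
      _ ≤ Submodule.span R (insert (1:A) T) := Submodule.span_mono h1
  -- decomposition: every a is r•1 + m
  have hdec : ∀ a : A, ∃ r : R, a - algebraMap R A r ∈ M := by
    intro a
    have : a ∈ Submodule.span R (insert (1:A) T) := hspan ▸ Submodule.mem_top
    rw [Submodule.mem_span_insert] at this
    obtain ⟨r, z, hz, rfl⟩ := this
    refine ⟨r, ?_⟩
    rw [Algebra.algebraMap_eq_smul_one]
    simpa using hz
  -- T * M ⊆ M
  have hTM : ∀ x ∈ T, ∀ m ∈ M, x * m ∈ M := by
    intro x hx m hm
    refine Submodule.span_induction (p := fun m _ => x * m ∈ M) ?_ ?_ ?_ ?_ hm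
    · intro y hy; exact Submodule.subset_span (hTT x hx y hy)
    · simp
    · intro a b _ _ ha hb; rw [mul_add]; exact M.add_mem ha hb
    · intro r a _ ha; rw [mul_smul_comm]; exact M.smul_mem r ha
  -- A * M ⊆ M
  have hAM : ∀ a : A, ∀ m ∈ M, a * m ∈ M := by
    intro a m hm
    have ha : a ∈ Submodule.span R (insert (1:A) T) := hspan ▸ Submodule.mem_top
    refine Submodule.span_induction (p := fun a _ => a * m ∈ M) ?_ ?_ ?_ ?_ ha
    · rintro x (rfl | hx)
      · simpa using hm
      · exact hTM x hx m hm
    · simp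
    · intro a b _ _ ha hb; rw [add_mul]; exact M.add_mem ha hb
    · intro r a _ ha; rw [smul_mul_assoc]; exact M.smul_mem r ha
  -- suppose M ≠ ⊤
  by_contra hMT
  set I : Ideal R := Submodule.comap (Algebra.linearMap R A) M with hI
  have hInetop : I ≠ ⊤ := by
    intro htop
    apply hMT
    have h1 : (1 : A) ∈ M := by
      have h2 : (1 : R) ∈ I := htop ▸ Submodule.mem_top
      rw [hI, Submodule.mem_comap] at h2
      simpa using h2
    rw [eq_top_iff]
    intro a _
    simpa using hAM a 1 h1
  set g : R →ₗ[R] A ⧸ M := M.mkQ ∘ₗ Algebra.linearMap R A with hg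
  have hgker : ∀ r : R, g r = 0 ↔ r ∈ I := by
    intro r
    simp [hg, Submodule.Quotient.mk_eq_zero, hI]
  set φ : (R ⧸ I) →ₗ[R] A ⧸ M := Submodule.liftQ I g (fun r hr => (hgker r).mpr hr) with hφ
  have hφmk : ∀ r : R, φ (Submodule.Quotient.mk r) = M.mkQ (algebraMap R A r) := by
    intro r; rfl
  have hφinj : Function.Injective φ := by
    rw [← LinearMap.ker_eq_bot]
    exact Submodule.ker_liftQ_eq_bot _ _ _ (fun r hr => (hgker r).mp hr)
  have hφsurj : Function.Surjective φ := by
    intro q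
    obtain ⟨a, rfl⟩ := Submodule.Quotient.mk_surjective M q
    obtain ⟨r, hr⟩ := hdec a
    refine ⟨Submodule.Quotient.mk r, ?_⟩
    rw [hφmk, Submodule.mkQ_apply, Submodule.Quotient.eq]
    have := M.neg_mem hr
    rwa [neg_sub] at this
  set e : (R ⧸ I) ≃ₗ[R] A ⧸ M := LinearEquiv.ofBijective φ ⟨hφinj, hφsurj⟩ with he
  set f₀ : A →ₗ[R] R ⧸ I := e.symm.toLinearMap ∘ₗ M.mkQ with hf₀
  have hkey : ∀ (a : A) (r : R), a - algebraMap R A r ∈ M →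
      f₀ a = Submodule.Quotient.mk r := by
    intro a r hr
    have h1 : e (Submodule.Quotient.mk r) = M.mkQ a := by
      show φ (Submodule.Quotient.mk r) = M.mkQ a
      rw [hφmk, Submodule.mkQ_apply, Submodule.mkQ_apply, Submodule.Quotient.eq]
      have := M.neg_mem hr
      rwa [neg_sub] at this
    show e.symm (M.mkQ a) = Submodule.Quotient.mk r
    rw [← h1, LinearEquiv.symm_apply_apply]
  have halg : ∀ r : R, f₀ (algebraMap R A r) = Submodule.Quotient.mk r := by
    intro r
    exact hkey _ r (by simp)
  have hmul : ∀ a b : A, f₀ (a * b) = f₀ a * f₀ b := by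
    intro a b
    obtain ⟨r, hr⟩ := hdec a
    obtain ⟨s, hs⟩ := hdec b
    have h1 : a * b - algebraMap R A (r * s) ∈ M := by
      have e1 : a * b - algebraMap R A (r * s)
          = a * (b - algebraMap R A s) + s • (a - algebraMap R A r) := by
        rw [Algebra.algebraMap_eq_smul_one, Algebra.algebraMap_eq_smul_one,
          Algebra.algebraMap_eq_smul_one]
        rw [mul_sub, smul_sub, mul_smul_comm, mul_one, smul_smul, mul_comm s r]
        abel
      rw [e1]
      exact M.add_mem (hAM a _ hs) (M.smul_mem s hr)
    rw [hkey _ _ h1, hkey _ _ hr, hkey _ _ hs]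
    rfl
  set f : A →ₐ[R] R ⧸ I :=
    { toFun := f₀
      map_one' := by
        have := halg 1
        simpa using this
      map_mul' := hmul
      map_zero' := f₀.map_zero
      map_add' := f₀.map_add
      commutes' := fun r => (halg r).trans rfl } with hf
  have hfsurj : Function.Surjective f := by
    intro x
    obtain ⟨r, rfl⟩ := Submodule.Quotient.mk_surjective I x
    exact ⟨algebraMap R A r, halg r⟩
  exact h I hInetop f hfsurj
end

section
/- Let $R$ be a commutative ring and $A$ an associative unital $R$-algebra finitely generated as an $R$-module. Elements $a_1,\dots,a_k$ generate $A$ as an $R$-algebra if and only if for every maximal ideal $\mathfrak{m}$ of $R$ the images of $a_1,\dots,a_k$ in $A/\mathfrak{m}A$ generate $A/\mathfrak{m}A$ as an $R/\mathfrak{m}$-algebra. -/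
/-!
Since `A` is a finite `R`-module, Nakayama's lemma applied at every maximal ideal shows that a
submodule `N` of `A` with `N + 𝔪A = A` for all maximal `𝔪` is all of `A`. Apply this to the
`R`-subalgebra generated by the `aᵢ`: its image in `A/𝔪A = (R/𝔪) ⊗[R] A` is the
`R/𝔪`-subalgebra generated by the images of the `aᵢ`, and this image is everything exactly when
`N + 𝔪A = A`.
-/

open TensorProduct

theorem Algebra.restrictScalars_adjoin_of_surjective {R S A : Type*} [CommSemiring R]
    [CommSemiring S] [Semiring A] [Algebra R S] [Algebra R A] [Algebra S A] [IsScalarTower R S A]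
    (hRS : Function.Surjective (algebraMap R S)) (s : Set A) :
    (Algebra.adjoin S s).restrictScalars R = Algebra.adjoin R s := by
  rw [Subalgebra.restrictScalars_adjoin, sup_eq_right]
  rintro _ ⟨x, rfl⟩
  obtain ⟨r, rfl⟩ := hRS x
  show algebraMap S A (algebraMap R S r) ∈ _
  rw [← IsScalarTower.algebraMap_apply]
  exact Subalgebra.algebraMap_mem _ r

theorem Algebra.adjoin_eq_top_iff_of_surjective {R S A : Type*} [CommSemiring R]
    [CommSemiring S] [Semiring A] [Algebra R S] [Algebra R A] [Algebra S A] [IsScalarTower R S A]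
    (hRS : Function.Surjective (algebraMap R S)) (s : Set A) :
    Algebra.adjoin S s = ⊤ ↔ Algebra.adjoin R s = ⊤ := by
  rw [← Algebra.restrictScalars_adjoin_of_surjective hRS,
    ← (Subalgebra.restrictScalars_injective R).eq_iff, Subalgebra.restrictScalars_top]

section Nakayama

variable {R M : Type*} [CommRing R] [AddCommGroup M] [Module R M] [Module.Finite R M]

theorem Module.exists_isMaximal_smul_top_ne_top [Nontrivial M] :
    ∃ m : Ideal R, m.IsMaximal ∧ m • (⊤ : Submodule R M) ≠ ⊤ := by
  have hann : Module.annihilator R M ≠ ⊤ :=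
    (Module.annihilator_eq_top_iff.not).mpr (not_subsingleton M)
  obtain ⟨m, hm, hann_le⟩ := (Module.annihilator R M).exists_le_maximal hann
  refine ⟨m, hm, fun htop => hm.ne_top ?_⟩
  obtain ⟨r, hr1, hr⟩ := Submodule.exists_sub_one_mem_and_smul_eq_zero_of_fg_of_le_smul m ⊤
    Module.Finite.fg_top htop.ge
  have hrm : r ∈ m := hann_le (Module.mem_annihilator.mpr fun x => hr x trivial)
  exact m.eq_top_iff_one.mpr (by simpa using m.sub_mem hrm hr1)

theorem Submodule.eq_top_of_forall_isMaximal_sup_smul_top_eq_top (N : Submodule R M)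
    (h : ∀ m : Ideal R, m.IsMaximal → N ⊔ m • ⊤ = ⊤) : N = ⊤ := by
  by_contra hN
  have : Nontrivial (M ⧸ N) := Submodule.Quotient.nontrivial_iff.mpr hN
  obtain ⟨m, hm, hne⟩ := Module.exists_isMaximal_smul_top_ne_top (R := R) (M := M ⧸ N)
  refine hne ?_
  have hmap := (Submodule.map_mkQ_eq_top N _).mpr (h m hm)
  rwa [Submodule.map_smul'', Submodule.map_top, Submodule.range_mkQ] at hmap

end Nakayama

theorem Submodule.map_mk_one_eq_top_iff {R M : Type*} [CommRing R] [AddCommGroup M] [Module R M]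
    (I : Ideal R) (N : Submodule R M) :
    N.map (TensorProduct.mk R (R ⧸ I) M 1) = ⊤ ↔ N ⊔ I • ⊤ = ⊤ := by
  rw [← TensorProduct.quotTensorEquivQuotSMul_symm_comp_mkQ, Submodule.map_comp,
    Submodule.map_eq_top_iff, Submodule.map_mkQ_eq_top, sup_comm]

theorem Algebra.adjoin_image_includeRight_eq_top_iff {R A : Type*} [CommRing R] [Ring A]
    [Algebra R A] (m : Ideal R) (s : Set A) :
    Algebra.adjoin (R ⧸ m)
        (Algebra.TensorProduct.includeRight '' s : Set ((R ⧸ m) ⊗[R] A)) = ⊤ ↔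
      Subalgebra.toSubmodule (Algebra.adjoin R s) ⊔ m • ⊤ = ⊤ := by
  rw [Algebra.adjoin_eq_top_iff_of_surjective Ideal.Quotient.mk_surjective, ← AlgHom.map_adjoin,
    ← Algebra.toSubmodule_eq_top, Subalgebra.map_toSubmodule]
  exact Submodule.map_mk_one_eq_top_iff m _

theorem stmt_5 {R A : Type*} [CommRing R] [Ring A] [Algebra R A] [Module.Finite R A]
    {k : ℕ} (a : Fin k → A) :
    Algebra.adjoin R (Set.range a) = ⊤ ↔
      ∀ (m : Ideal R), m.IsMaximal →
        Algebra.adjoin (R ⧸ m)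
          (Set.range fun i =>
            (Algebra.TensorProduct.includeRight (a i) : (R ⧸ m) ⊗[R] A)) = ⊤ := by
  simp_rw [Set.range_comp', Algebra.adjoin_image_includeRight_eq_top_iff]
  exact ⟨fun h m _ => by simp [h], fun h =>
    Algebra.toSubmodule_eq_top.mp (Submodule.eq_top_of_forall_isMaximal_sup_smul_top_eq_top _ h)⟩
end

section
/- Let $R$ be a commutative ring and $A$ a unital $R$-algebra that can be generated by $m$ elements as an $R$-module. Elements $a_1,\dots,a_k$ generate $A$ as an $R$-algebra if and only if the non-commutative monomials in $a_1,\dots,a_k$ of degree less than $m$ generate $A$ as an $R$-module. -/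
/-!
Let `M n` be the span of the monomials of degree `< n` in the `aᵢ`; then `M (n + 1) = 1 + W * M n`
with `W` the span of the `aᵢ`. If `M m ≠ A`, a maximal submodule `P ⊇ M m` is killed by the
maximal ideal `𝔪` annihilating the simple module `A / P`, so `M m + 𝔪 A ≠ A`. Since `W * 𝔪 A ≤ 𝔪 A`,
the recursion shows that the chain of images of `M n` in `A / 𝔪 A` is constant as soon as it stops
growing. It exhausts `A / 𝔪 A` (because `A` is generated by the `aᵢ` and is finitely generated),
and `A / 𝔪 A` has length at most `m`, being spanned by `m` vectors over the field `R / 𝔪`; hence the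
chain reaches the top by step `m`.
-/

open Submodule
open scoped Pointwise

section Monoid

variable {A : Type*} [Monoid A]

def monomialsLT (T : Set A) (n : ℕ) : Set A :=
  {x | ∃ l : List A, l.length < n ∧ (∀ y ∈ l, y ∈ T) ∧ l.prod = x}

variable (T : Set A)

lemma monomialsLT_mono : Monotone (monomialsLT T) := by
  rintro n n' h x ⟨l, hl, hT, rfl⟩
  exact ⟨l, hl.trans_le h, hT, rfl⟩

lemma monomialsLT_succ (n : ℕ) : monomialsLT T (n + 1) = {1} ∪ T * monomialsLT T n := by
  ext x
  constructor
  · rintro ⟨_ | ⟨y, l⟩, hl, hT, rfl⟩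
    · exact Or.inl rfl
    · exact Or.inr ⟨y, hT y List.mem_cons_self, l.prod,
        ⟨l, by simpa using hl, fun z hz => hT z (List.mem_cons_of_mem y hz), rfl⟩, rfl⟩
  · rintro (rfl | ⟨y, hy, _, ⟨l, hl, hT, rfl⟩, rfl⟩)
    · exact ⟨[], n.succ_pos, by simp, rfl⟩
    · exact ⟨y :: l, by simpa using hl, by simpa [hy] using hT, rfl⟩

lemma iUnion_monomialsLT : ⋃ n, monomialsLT T n = Submonoid.closure T := by
  ext x
  simp only [Set.mem_iUnion, SetLike.mem_coe]
  constructor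
  · rintro ⟨n, l, -, hT, rfl⟩
    exact Submonoid.list_prod_mem _ fun y hy => Submonoid.subset_closure (hT y hy)
  · intro hx
    obtain ⟨l, hT, rfl⟩ := Submonoid.exists_list_of_mem_closure hx
    exact ⟨l.length + 1, l, l.length.lt_succ_self, hT, rfl⟩

end Monoid

section Algebra

variable {R A : Type*} [CommSemiring R] [Semiring A] [Algebra R A] (T : Set A)

lemma span_monomialsLT_succ (n : ℕ) :
    span R (monomialsLT T (n + 1)) = 1 ⊔ span R T * span R (monomialsLT T n) := by
  rw [monomialsLT_succ, span_union, span_mul_span, one_eq_span]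

lemma iSup_span_monomialsLT :
    ⨆ n, span R (monomialsLT T n) = Subalgebra.toSubmodule (Algebra.adjoin R T) := by
  rw [Algebra.adjoin_eq_span, ← iUnion_monomialsLT, span_iUnion]

lemma span_monomialsLT_le_adjoin (n : ℕ) :
    span R (monomialsLT T n) ≤ Subalgebra.toSubmodule (Algebra.adjoin R T) :=
  iSup_span_monomialsLT (R := R) T ▸ le_iSup (fun n => span R (monomialsLT T n)) n

lemma exists_span_monomialsLT_eq_top [Module.Finite R A] (h : Algebra.adjoin R T = ⊤) :
    ∃ n, span R (monomialsLT T n) = ⊤ := by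
  have hmono : Monotone fun n => span R (monomialsLT T n) :=
    fun _ _ h => span_mono (monomialsLT_mono T h)
  obtain ⟨_, ⟨n, rfl⟩, hn⟩ := (CompleteLattice.isCompactElement_iff_le_of_directed_sSup_le _ _).1
    ((fg_iff_compact _).1 (Module.Finite.fg_top (R := R) (M := A))) _ (Set.range_nonempty _)
    hmono.directed_le.directedOn_range
    (by rw [sSup_range, iSup_span_monomialsLT, h, Algebra.top_toSubmodule])
  exact ⟨n, top_le_iff.1 hn⟩

lemma span_monomialsLT_add_two_le {J : Submodule R A} (hJ : span R T * J ≤ J) {n : ℕ}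
    (h : span R (monomialsLT T (n + 1)) ≤ span R (monomialsLT T n) ⊔ J) :
    span R (monomialsLT T (n + 2)) ≤ span R (monomialsLT T (n + 1)) ⊔ J := by
  set M := fun n => span R (monomialsLT T n)
  calc M (n + 2) = 1 ⊔ span R T * M (n + 1) := span_monomialsLT_succ T (n + 1)
    _ ≤ 1 ⊔ span R T * (M n ⊔ J) := by gcongr
    _ = (1 ⊔ span R T * M n) ⊔ span R T * J := by rw [Submodule.mul_sup, sup_assoc]
    _ ≤ M (n + 1) ⊔ J := by rw [← span_monomialsLT_succ]; gcongr

lemma Submodule.mul_smul_top_le (I : Ideal R) (X : Submodule R A) : X * (I • ⊤) ≤ I • ⊤ :=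
  mul_le.2 fun w _ _ hy => smul_top_le_comap_smul_top I (LinearMap.mulLeft R w) hy

end Algebra

section Chain

variable {α : Type*} [PartialOrder α] {f : ℕ → α}

lemma Monotone.apply_eq_of_succ_le (hf : Monotone f)
    (hstab : ∀ n, f (n + 1) ≤ f n → f (n + 2) ≤ f (n + 1)) {i : ℕ} (hi : f (i + 1) ≤ f i) :
    ∀ {j}, i ≤ j → f j = f i := by
  have hsucc : ∀ k, f (i + k + 1) ≤ f (i + k) := by
    intro k
    induction k with
    | zero => exact hi
    | succ k ih => exact hstab _ ih
  intro j hij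
  obtain ⟨k, rfl⟩ := Nat.exists_eq_add_of_le hij
  induction k with
  | zero => rfl
  | succ k ih => exact ((hsucc k).antisymm (hf (Nat.le_succ _))).trans (ih (Nat.le_add_right _ _))

lemma natCast_le_height_of_lt_succ {n : ℕ} (hf : ∀ i < n, f i < f (i + 1)) :
    ∀ i ≤ n, (i : ℕ∞) ≤ Order.height (f i) := by
  intro i hi
  induction i with
  | zero => simp
  | succ i ih =>
    calc ((i + 1 : ℕ) : ℕ∞) = i + 1 := by push_cast; rfl
      _ ≤ Order.height (f i) + 1 := by gcongr; exact ih (by omega)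
      _ ≤ _ := Order.height_add_one_le (hf i (by omega))

lemma Monotone.apply_eq_top_of_height_top_le [OrderTop α] (hf : Monotone f)
    (hstab : ∀ n, f (n + 1) ≤ f n → f (n + 2) ≤ f (n + 1)) (htop : ∃ n, f n = ⊤) {m : ℕ}
    (hm : Order.height (⊤ : α) ≤ m) : f m = ⊤ := by
  by_contra hne
  have hlt : ∀ i < m + 1, f i < f (i + 1) := by
    intro i hi
    refine (hf i.le_succ).lt_of_not_ge fun hle => hne ?_
    obtain ⟨n, hn⟩ := htop
    have hfi : f i = ⊤ := by
      rw [← hf.apply_eq_of_succ_le hstab hle (le_max_right n i)]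
      exact top_le_iff.1 (hn ▸ hf (le_max_left n i))
    exact top_le_iff.1 (hfi ▸ hf (by omega))
  have hheight := ((natCast_le_height_of_lt_succ hlt (m + 1) le_rfl).trans
    (Order.height_mono le_top)).trans hm
  norm_cast at hheight
  omega

end Chain

section Module

variable {R M : Type*} [CommRing R] [AddCommGroup M] [Module R M]

lemma Submodule.exists_isMaximal_sup_smul_top_ne_top [Module.Finite R M] {N : Submodule R M}
    (hN : N ≠ ⊤) : ∃ 𝔪 : Ideal R, 𝔪.IsMaximal ∧ N ⊔ 𝔪 • ⊤ ≠ ⊤ := by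
  obtain ⟨P, hP, hNP⟩ := (eq_top_or_exists_le_coatom N).resolve_left hN
  have : IsSimpleModule R (M ⧸ P) := isSimpleModule_iff_isCoatom.mpr hP
  refine ⟨Module.annihilator R (M ⧸ P), IsSimpleModule.annihilator_isMaximal, ?_⟩
  have hsmul : Module.annihilator R (M ⧸ P) • (⊤ : Submodule R M) ≤ P := by
    refine smul_le.2 fun c hc x _ => ?_
    rw [← Quotient.mk_eq_zero, Quotient.mk_smul]
    exact Module.mem_annihilator.mp hc _
  exact fun h => hP.1 (top_le_iff.1 (h ▸ sup_le hNP hsmul))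

lemma length_quotient_smul_top_le_card {𝔪 : Ideal R} [𝔪.IsMaximal] (s : Finset M)
    (hs : span R (s : Set M) = ⊤) : Module.length R (M ⧸ 𝔪 • (⊤ : Submodule R M)) ≤ s.card := by
  classical
  let := Ideal.Quotient.field 𝔪
  set π := (𝔪 • (⊤ : Submodule R M)).mkQ
  have hspan : span (R ⧸ 𝔪) (s.image π : Set (M ⧸ 𝔪 • (⊤ : Submodule R M))) = ⊤ := by
    refine restrictScalars_injective R _ _ (top_le_iff.1 ?_)
    calc ⊤ = map π (span R s) := by rw [hs, Submodule.map_top, range_mkQ]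
      _ = span R (π '' s) := map_span _ _
      _ ≤ _ := by rw [Finset.coe_image]; exact span_le_restrictScalars R (R ⧸ 𝔪) _
  have : Module.Finite (R ⧸ 𝔪) (M ⧸ 𝔪 • (⊤ : Submodule R M)) := ⟨⟨_, hspan⟩⟩
  rw [Module.length_eq_of_surjective (R := R ⧸ 𝔪) Ideal.Quotient.mk_surjective,
    Module.length_eq_finrank, Nat.cast_le, ← finrank_top, ← hspan]
  exact (finrank_span_finset_le_card _).trans Finset.card_image_le

end Module

theorem stmt_7 {R A : Type*} [CommRing R] [Ring A] [Algebra R A]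
    {m : ℕ} (s : Finset A) (hs : s.card = m) (hspan : Submodule.span R (s : Set A) = ⊤)
    {k : ℕ} (a : Fin k → A) :
    Algebra.adjoin R (Set.range a) = ⊤ ↔
      Submodule.span R
        {x : A | ∃ l : List A, l.length < m ∧ (∀ y ∈ l, y ∈ Set.range a) ∧ l.prod = x} = ⊤ := by
  set M := fun n => span R (monomialsLT (Set.range a) n)
  change _ ↔ M m = ⊤
  constructor
  · intro hadj
    have : Module.Finite R A := ⟨⟨s, hspan⟩⟩
    by_contra hne
    obtain ⟨𝔪, h𝔪, hsup⟩ := exists_isMaximal_sup_smul_top_ne_top hne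
    set J := 𝔪 • (⊤ : Submodule R A)
    have hJ : span R (Set.range a) * J ≤ J := mul_smul_top_le 𝔪 _
    obtain ⟨n, hn⟩ := exists_span_monomialsLT_eq_top _ hadj
    have hmono : Monotone fun n => map J.mkQ (M n) :=
      fun _ _ h => map_mono (span_mono (monomialsLT_mono _ h))
    have key : map J.mkQ (M m) = ⊤ := by
      refine hmono.apply_eq_top_of_height_top_le (fun n h => ?_) ⟨n, by simp [M, hn]⟩ ?_
      · rw [LinearMap.map_le_map_iff, ker_mkQ] at h ⊢
        exact span_monomialsLT_add_two_le _ hJ h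
      · rw [← Module.length_eq_height, ← hs]
        exact length_quotient_smul_top_le_card s hspan
    exact hsup (sup_comm J _ ▸ (map_mkQ_eq_top _ _).1 key)
  · intro h
    rw [← Algebra.toSubmodule_eq_top, eq_top_iff, ← h]
    exact span_monomialsLT_le_adjoin _ m
end

section
/- Let $F$ be a field, $A$ a finite-dimensional simple $F$-algebra, and $k,m$ positive integers. The elements $a_1=(a_{11},\dots,a_{1m}),\dots,a_k=(a_{k1},\dots,a_{km})$ of $A^m$ generate $A^m$ as an $F$-algebra if and only if: (1) for each $i$, the elements $a_{1i},\dots,a_{ki}$ generate $A$ as an $F$-algebra, and (2) there is no pair of distinct indices $i \ne j$ and $F$-algebra automorphism $\Psi$ of $A$ with $a_{ti} = \Psi(a_{tj})$ for all $t=1,\dots,k$. -/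
section aux

variable {F A : Type*} [Field F] [Ring A] [Algebra F A]

lemma aux_central_idem [IsSimpleRing A] (e : A) (he : e * e = e)
    (hc : ∀ x : A, x * e = e * x) : e = 0 ∨ e = 1 := by
  have simple := IsSimpleRing.simple (R := A)
  by_cases h0 : e = 0
  · exact Or.inl h0
  right
  let I : TwoSidedIdeal A := TwoSidedIdeal.mk' {x : A | x * e = x}
    (by simp)
    (fun {x y} hx hy => by simp only [Set.mem_setOf_eq] at *; rw [add_mul, hx, hy])
    (fun {x} hx => by simp only [Set.mem_setOf_eq] at *; rw [neg_mul, hx])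
    (fun {x y} hy => by simp only [Set.mem_setOf_eq] at *; rw [mul_assoc, hy])
    (fun {x y} hx => by
      simp only [Set.mem_setOf_eq] at *
      rw [mul_assoc, hc, ← mul_assoc, hx])
  have memI : ∀ x : A, x ∈ I ↔ x * e = x := fun x => TwoSidedIdeal.mem_mk' _ _ _ _ _ _ x
  have heI : e ∈ I := (memI e).mpr he
  have hItop : I = ⊤ := by
    rcases simple.eq_bot_or_eq_top I with h | h
    · exfalso; apply h0; rw [h] at heI; simpa using heI
    · exact h
  have h1 : (1:A) ∈ I := by rw [hItop]; trivial
  rw [memI] at h1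
  rw [one_mul] at h1
  exact h1

lemma aux_pair [FiniteDimensional F A] [IsSimpleRing A] (C : Subalgebra F (A × A))
    (h1 : ∀ x : A, ∃ c ∈ C, c.1 = x) (h2 : ∀ y : A, ∃ c ∈ C, c.2 = y) :
    C = ⊤ ∨ ∃ Ψ : A ≃ₐ[F] A, ∀ c ∈ C, c.2 = Ψ c.1 := by
  have simple := IsSimpleRing.simple (R := A)
  let K : TwoSidedIdeal A := TwoSidedIdeal.mk' {y : A | ((0:A), y) ∈ C}
    (C.zero_mem)
    (fun {x y} hx hy => by
      have := C.add_mem hx hy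
      simpa using this)
    (fun {x} hx => by
      have := C.neg_mem hx
      simpa using this)
    (fun {x y} hy => by
      obtain ⟨c, hc, hc2⟩ := h2 x
      have := C.mul_mem hc hy
      have heq : c * ((0:A), y) = (((0:A)), x * y) := by
        ext <;> simp [hc2]
      rwa [heq] at this)
    (fun {x y} hx => by
      obtain ⟨c, hc, hc2⟩ := h2 y
      have := C.mul_mem hx hc
      have heq : ((0:A), x) * c = (((0:A)), x * y) := by
        ext <;> simp [hc2]
      rwa [heq] at this)
  have memK : ∀ y : A, y ∈ K ↔ ((0:A), y) ∈ C := fun y => TwoSidedIdeal.mem_mk' _ _ _ _ _ _ y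
  rcases simple.eq_bot_or_eq_top K with hK | hK
  · -- K = ⊥ : graph of an automorphism
    right
    let f : C →ₐ[F] A := (AlgHom.fst F A A).comp C.val
    have hfinj : Function.Injective f := by
      rw [injective_iff_map_eq_zero]
      intro c hc0
      have hc1 : (c : A × A).1 = 0 := hc0
      have hmem : (c : A × A).2 ∈ K := by
        rw [memK]
        have : ((0:A), (c : A × A).2) = (c : A × A) := by ext <;> simp [hc1.symm]
        rw [this]; exact c.2
      rw [hK] at hmem
      have hc2 : (c : A × A).2 = 0 := by simpa using hmem
      apply Subtype.ext
      ext <;> simp [hc1, hc2]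
    have hfsurj : Function.Surjective f := by
      intro x
      obtain ⟨c, hc, hcx⟩ := h1 x
      exact ⟨⟨c, hc⟩, hcx⟩
    let e := AlgEquiv.ofBijective f ⟨hfinj, hfsurj⟩
    let ψ : A →ₐ[F] A := ((AlgHom.snd F A A).comp C.val).comp e.symm.toAlgHom
    have hψ : ∀ c ∈ C, ψ c.1 = c.2 := by
      intro c hc
      have h1' : e ⟨c, hc⟩ = c.1 := rfl
      show ((AlgHom.snd F A A).comp C.val) (e.symm c.1) = c.2
      rw [← h1', e.symm_apply_apply]
      rfl
    have hψsurj : Function.Surjective ψ := by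
      intro y
      obtain ⟨c, hc, hcy⟩ := h2 y
      exact ⟨c.1, (hψ c hc).trans hcy⟩
    have hψinj : Function.Injective ψ :=
      LinearMap.injective_iff_surjective (f := ψ.toLinearMap) |>.mpr hψsurj
    exact ⟨AlgEquiv.ofBijective ψ ⟨hψinj, hψsurj⟩, fun c hc => (hψ c hc).symm⟩
  · -- K = ⊤ : C = ⊤
    left
    rw [eq_top_iff]
    intro z _
    obtain ⟨c, hc, hcz⟩ := h1 z.1
    have hmem : z.2 - c.2 ∈ K := by rw [hK]; trivial
    rw [memK] at hmem
    have : z = c + ((0:A), z.2 - c.2) := by ext <;> simp [hcz]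
    rw [this]
    exact C.add_mem hc hmem

lemma aux_pi [FiniteDimensional F A] [IsSimpleRing A] :
    ∀ (m : ℕ) (B : Subalgebra F (Fin m → A)),
      (∀ (i : Fin m) (x : A), ∃ b ∈ B, b i = x) →
      (∀ (i j : Fin m), i ≠ j → ∀ x y : A, ∃ b ∈ B, b i = x ∧ b j = y) →
      B = ⊤ := by
  intro m
  induction m with
  | zero =>
    intro B _ _
    rw [eq_top_iff]
    intro x _
    have : x = 1 := Subsingleton.elim _ _
    rw [this]; exact B.one_mem
  | succ m ih =>
    intro B hsingle hpair
    have simple := IsSimpleRing.simple (R := A)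
    let p : (Fin (m+1) → A) →ₐ[F] (Fin m → A) :=
      Pi.algHom F _ fun i => Pi.evalAlgHom F (fun _ => A) i.castSucc
    have hp : ∀ (x : Fin (m+1) → A) (i : Fin m), p x i = x i.castSucc := fun _ _ => rfl
    have hsplit : ∀ x : Fin (m+1) → A, (∀ i : Fin m, x i.castSucc = 0) →
        x = Pi.single (Fin.last m) (x (Fin.last m)) := by
      intro x hx
      funext j
      refine Fin.lastCases ?_ ?_ j
      · rw [Pi.single_eq_same]
      · intro i
        rw [Pi.single_eq_of_ne (Fin.castSucc_lt_last i).ne, hx]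
    have hB' : B.map p = ⊤ := by
      apply ih
      · intro i x
        obtain ⟨b, hb, hbx⟩ := hsingle i.castSucc x
        exact ⟨p b, ⟨b, hb, rfl⟩, hbx⟩
      · intro i j hij x y
        obtain ⟨b, hb, hbx, hby⟩ := hpair i.castSucc j.castSucc
          (fun h => hij (Fin.castSucc_injective m h)) x y
        exact ⟨p b, ⟨b, hb, rfl⟩, hbx, hby⟩
    let K : TwoSidedIdeal A := TwoSidedIdeal.mk'
      {y : A | Pi.single (Fin.last m) y ∈ B}
      (by simpa [Pi.single_zero] using B.zero_mem)
      (fun {x y} hx hy => by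
        have := B.add_mem hx hy
        simpa [Pi.single_add] using this)
      (fun {x} hx => by
        have := B.neg_mem hx
        simpa [Pi.single_neg] using this)
      (fun {x y} hy => by
        obtain ⟨b, hb, hbl⟩ := hsingle (Fin.last m) x
        have hmul := B.mul_mem hb hy
        have heq : b * Pi.single (Fin.last m) y = Pi.single (Fin.last m) (x * y) := by
          funext j
          refine Fin.lastCases ?_ ?_ j
          · simp [hbl]
          · intro i
            simp [Pi.single_eq_of_ne (Fin.castSucc_lt_last i).ne]
        rwa [heq] at hmul)
      (fun {x y} hx => by
        obtain ⟨b, hb, hbl⟩ := hsingle (Fin.last m) y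
        have hmul := B.mul_mem hx hb
        have heq : Pi.single (Fin.last m) x * b = Pi.single (Fin.last m) (x * y) := by
          funext j
          refine Fin.lastCases ?_ ?_ j
          · simp [hbl]
          · intro i
            simp [Pi.single_eq_of_ne (Fin.castSucc_lt_last i).ne]
        rwa [heq] at hmul)
    have memK : ∀ y : A, y ∈ K ↔ Pi.single (Fin.last m) y ∈ B :=
      fun y => TwoSidedIdeal.mem_mk' _ _ _ _ _ _ y
    rcases simple.eq_bot_or_eq_top K with hK | hK
    · -- K = ⊥ : contradiction
      exfalso
      let f : B →ₐ[F] (Fin m → A) := p.comp B.val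
      have hfinj : Function.Injective f := by
        rw [injective_iff_map_eq_zero]
        intro b hb0
        have hcoord : ∀ i : Fin m, (b : Fin (m+1) → A) i.castSucc = 0 := by
          intro i
          have : p (b : Fin (m+1) → A) = 0 := hb0
          rw [← hp (b : Fin (m+1) → A) i, this]
          rfl
        have hb1 := hsplit _ hcoord
        have hmem : (b : Fin (m+1) → A) (Fin.last m) ∈ K := by
          rw [memK, ← hb1]; exact b.2
        rw [hK] at hmem
        have h0 : (b : Fin (m+1) → A) (Fin.last m) = 0 := by simpa using hmem
        apply Subtype.ext
        rw [hb1, h0, Pi.single_zero]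
        rfl
      have hfsurj : Function.Surjective f := by
        intro z
        have : z ∈ B.map p := by rw [hB']; trivial
        obtain ⟨b, hb, hpb⟩ := Subalgebra.mem_map.mp this
        exact ⟨⟨b, hb⟩, hpb⟩
      let e := AlgEquiv.ofBijective f ⟨hfinj, hfsurj⟩
      let φ : (Fin m → A) →ₐ[F] A :=
        ((Pi.evalAlgHom F (fun _ => A) (Fin.last m)).comp B.val).comp e.symm.toAlgHom
      have hφ : ∀ b (hb : b ∈ B), φ (p b) = b (Fin.last m) := by
        intro b hb
        have h1 : p b = e ⟨b, hb⟩ := rfl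
        show ((Pi.evalAlgHom F (fun _ => A) (Fin.last m)).comp B.val) (e.symm (p b)) = _
        rw [h1, e.symm_apply_apply]
        rfl
      have hφsurj : Function.Surjective φ := by
        intro y
        obtain ⟨b, hb, hbl⟩ := hsingle (Fin.last m) y
        exact ⟨p b, (hφ b hb).trans hbl⟩
      have hcentral : ∀ (i : Fin m) (x : A),
          x * φ (Pi.single i 1) = φ (Pi.single i 1) * x := by
        intro i x
        obtain ⟨z, hz⟩ := hφsurj x
        rw [← hz, ← map_mul, ← map_mul]
        congr 1
        funext j
        by_cases h : j = i
        · subst h; simp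
        · simp [Pi.single_eq_of_ne h]
      have hidem : ∀ i : Fin m, φ (Pi.single i 1) = 0 ∨ φ (Pi.single i 1) = 1 := by
        intro i
        apply aux_central_idem
        · rw [← map_mul]
          congr 1
          funext j
          by_cases h : j = i
          · subst h; simp
          · simp [Pi.single_eq_of_ne h]
        · exact hcentral i
      have hsum : ∑ i : Fin m, φ (Pi.single i 1) = 1 := by
        have hs1 : ∑ i : Fin m, (Pi.single i (1:A) : Fin m → A) = 1 :=
          Finset.univ_sum_single (1 : Fin m → A)
        rw [← map_sum, hs1, map_one]
      obtain ⟨i₀, hi₀⟩ : ∃ i₀ : Fin m, φ (Pi.single i₀ 1) = 1 := by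
        by_contra h
        push_neg at h
        have hz : ∀ i : Fin m, φ (Pi.single i 1) = 0 :=
          fun i => (hidem i).resolve_right (h i)
        rw [Finset.sum_congr rfl (fun i _ => hz i), Finset.sum_const_zero] at hsum
        exact one_ne_zero hsum.symm
      have hconst : ∀ z : Fin m → A, φ z = φ (fun _ => z i₀) := by
        intro z
        have hA : z * Pi.single i₀ 1 = Pi.single i₀ (z i₀) := by
          funext j
          by_cases h : j = i₀
          · subst h; simp
          · simp [Pi.single_eq_of_ne h]
        have hB1 : (fun _ => z i₀ : Fin m → A) * Pi.single i₀ 1 = Pi.single i₀ (z i₀) := by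
          funext j
          by_cases h : j = i₀
          · subst h; simp
          · simp [Pi.single_eq_of_ne h]
        calc φ z = φ z * φ (Pi.single i₀ 1) := by rw [hi₀, mul_one]
          _ = φ (z * Pi.single i₀ 1) := (map_mul φ _ _).symm
          _ = φ ((fun _ => z i₀) * Pi.single i₀ 1) := by rw [hA, hB1]
          _ = φ (fun _ => z i₀) * φ (Pi.single i₀ 1) := map_mul φ _ _
          _ = φ (fun _ => z i₀) := by rw [hi₀, mul_one]
      obtain ⟨b, hb, hbi, hbl⟩ := hpair i₀.castSucc (Fin.last m)
        (Fin.castSucc_lt_last i₀).ne 0 1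
      have hcontra : (1:A) = 0 := by
        calc (1:A) = b (Fin.last m) := hbl.symm
          _ = φ (p b) := (hφ b hb).symm
          _ = φ (fun _ => p b i₀) := hconst _
          _ = φ 0 := by rw [hp b i₀, hbi]; rfl
          _ = 0 := map_zero φ
      exact one_ne_zero hcontra
    · -- K = ⊤ : B = ⊤
      rw [eq_top_iff]
      intro x _
      have hx' : p x ∈ B.map p := by rw [hB']; trivial
      obtain ⟨b, hb, hpb⟩ := Subalgebra.mem_map.mp hx'
      have hcoord : ∀ i : Fin m, (x - b) i.castSucc = 0 := by
        intro i
        have h0 : p (x - b) = 0 := by rw [map_sub, hpb, sub_self]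
        rw [← hp (x - b) i, h0]
        rfl
      have hxb := hsplit _ hcoord
      have hmem : (x - b) (Fin.last m) ∈ K := by rw [hK]; trivial
      rw [memK] at hmem
      have : x = (x - b) + b := by abel
      rw [this, hxb]
      exact B.add_mem hmem hb

end aux

theorem stmt_9 {F A : Type*} [Field F] [Ring A] [Algebra F A] [FiniteDimensional F A]
    [IsSimpleRing A] {k m : ℕ} (hk : 0 < k) (hm : 0 < m)
    (a : Fin k → (Fin m → A)) :
    Algebra.adjoin F (Set.range a) = ⊤ ↔
      (∀ i : Fin m, Algebra.adjoin F (Set.range fun t => a t i) = ⊤) ∧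
      ¬ ∃ (i j : Fin m), i ≠ j ∧ ∃ Ψ : A ≃ₐ[F] A, ∀ t : Fin k, a t i = Ψ (a t j) := by
  have hmap : ∀ i : Fin m,
      Subalgebra.map (Pi.evalAlgHom F (fun _ => A) i) (Algebra.adjoin F (Set.range a))
        = Algebra.adjoin F (Set.range fun t => a t i) := by
    intro i
    rw [AlgHom.map_adjoin]
    congr 1
    rw [← Set.range_comp]
    rfl
  constructor
  · intro h
    constructor
    · intro i
      rw [← hmap i, h, Algebra.map_top]
      rw [AlgHom.range_eq_top]
      exact Function.surjective_eval i
    · rintro ⟨i, j, hij, Ψ, hΨ⟩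
      have hle : Algebra.adjoin F (Set.range a) ≤
          AlgHom.equalizer (Pi.evalAlgHom F (fun _ => A) i)
            ((Ψ : A →ₐ[F] A).comp (Pi.evalAlgHom F (fun _ => A) j)) := by
        rw [Algebra.adjoin_le_iff]
        rintro x ⟨t, rfl⟩
        exact hΨ t
      rw [h] at hle
      have hmem : (Pi.single i (1:A) : Fin m → A) ∈
          AlgHom.equalizer (Pi.evalAlgHom F (fun _ => A) i)
            ((Ψ : A →ₐ[F] A).comp (Pi.evalAlgHom F (fun _ => A) j)) := hle trivial
      have : (1:A) = Ψ (0:A) := by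
        have := hmem
        simpa [AlgHom.mem_equalizer, Pi.single_eq_same,
          Pi.single_eq_of_ne (Ne.symm hij)] using this
      rw [map_zero] at this
      exact one_ne_zero this
  · rintro ⟨h1, h2⟩
    have hsingle : ∀ (i : Fin m) (x : A), ∃ b ∈ Algebra.adjoin F (Set.range a), b i = x := by
      intro i x
      have : x ∈ Subalgebra.map (Pi.evalAlgHom F (fun _ => A) i)
          (Algebra.adjoin F (Set.range a)) := by
        rw [hmap i, h1 i]; trivial
      obtain ⟨b, hb, hbx⟩ := Subalgebra.mem_map.mp this
      exact ⟨b, hb, hbx⟩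
    apply aux_pi m (Algebra.adjoin F (Set.range a)) hsingle
    intro i j hij x y
    let g : (Fin m → A) →ₐ[F] A × A :=
      (Pi.evalAlgHom F (fun _ => A) i).prod (Pi.evalAlgHom F (fun _ => A) j)
    have hproj1 : ∀ u : A, ∃ c ∈ (Algebra.adjoin F (Set.range a)).map g, c.1 = u := by
      intro u
      obtain ⟨b, hb, hbx⟩ := hsingle i u
      exact ⟨g b, ⟨b, hb, rfl⟩, hbx⟩
    have hproj2 : ∀ u : A, ∃ c ∈ (Algebra.adjoin F (Set.range a)).map g, c.2 = u := by
      intro u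
      obtain ⟨b, hb, hbx⟩ := hsingle j u
      exact ⟨g b, ⟨b, hb, rfl⟩, hbx⟩
    rcases aux_pair _ hproj1 hproj2 with hC | ⟨Ψ, hΨ⟩
    · have : (x, y) ∈ (Algebra.adjoin F (Set.range a)).map g := by rw [hC]; trivial
      obtain ⟨b, hb, hgb⟩ := Subalgebra.mem_map.mp this
      refine ⟨b, hb, ?_, ?_⟩
      · exact congrArg Prod.fst hgb
      · exact congrArg Prod.snd hgb
    · exfalso
      apply h2
      refine ⟨j, i, hij.symm, Ψ, fun t => ?_⟩
      exact hΨ (g (a t)) ⟨a t, Algebra.subset_adjoin ⟨t, rfl⟩, rfl⟩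
end

section
/- Let $S$ be a commutative ring. Two matrices $A, B \in M_2(S)$ generate $M_2(S)$ as an $S$-algebra if and only if $\det(AB - BA)$ is a unit in $S$. -/
/-!
The subalgebra generated by two `2 × 2` matrices `A, B` is the `S`-span of `1, A, B, AB`:
by Cayley–Hamilton `A²` and `B²` lie in the span of `1` and the matrix itself, and polarizing it
(`AB + BA` is a combination of `1, A, B`) shows that the span is closed under multiplication.
Four vectors span the free module `S⁴` iff their coordinate determinant is a unit (a surjective
endomorphism of a finitely generated module is injective), and for `1, A, B, AB` that
determinant works out to `det (AB - BA)`.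
-/

open Submodule

theorem Module.Basis.span_range_eq_top_iff_isUnit_det {R M ι : Type*} [CommRing R]
    [AddCommGroup M] [Module R M] [Fintype ι] [DecidableEq ι] (e : Basis ι R M) (v : ι → M) :
    span R (Set.range v) = ⊤ ↔ IsUnit (e.det v) := by
  refine ⟨fun hspan ↦ (e.is_basis_iff_det).mp ⟨?_, hspan⟩, fun h ↦ ((e.is_basis_iff_det).mpr h).2⟩
  have : Module.Finite R M := Module.Finite.of_basis e
  rw [← Fintype.range_linearCombination, LinearMap.range_eq_top] at hspan
  exact linearIndependent_iff_injective_fintypeLinearCombination.mpr <|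
    OrzechProperty.injective_of_surjective_of_injective _ _ e.equivFun.symm.injective hspan

section QuadraticPair

variable {R A : Type*} [CommSemiring R] [Semiring A] [Algebra R A]

theorem mul_mem_span_pair_of_mem_span_one_pair {x y : A} (z : A) (h : x ∈ span R {1, y}) :
    z * x ∈ span R {z, z * y} := by
  obtain ⟨r, s, rfl⟩ := mem_span_pair.mp h
  exact mem_span_pair.mpr ⟨r, s, by simp [mul_add]⟩

theorem mul_mem_span_pair_of_mem_span_one_pair' {x y : A} (z : A) (h : x ∈ span R {1, y}) :
    x * z ∈ span R {z, y * z} := by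
  obtain ⟨r, s, rfl⟩ := mem_span_pair.mp h
  exact mem_span_pair.mpr ⟨r, s, by simp [add_mul]⟩

theorem Algebra.toSubmodule_adjoin_pair_eq_span {a b : A} (ha : a * a ∈ span R {1, a})
    (hb : b * b ∈ span R {1, b}) (hba : b * a ∈ span R {1, a, b, a * b}) :
    Subalgebra.toSubmodule (Algebra.adjoin R {a, b}) = span R {1, a, b, a * b} := by
  set P := span R {1, a, b, a * b}
  have one_mem : (1 : A) ∈ P := subset_span (by simp)
  have a_mem : a ∈ P := subset_span (by simp)
  have b_mem : b ∈ P := subset_span (by simp)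
  have ab_mem : a * b ∈ P := subset_span (by simp)
  have maps_to {f : A →ₗ[R] A} (h1 : f 1 ∈ P) (h_a : f a ∈ P) (h_b : f b ∈ P)
      (h_ab : f (a * b) ∈ P) : ∀ y ∈ P, f y ∈ P := fun y hy ↦
    span_le (p := P.comap f) |>.mpr (by simp [Set.insert_subset_iff, *]) hy
  have span_pair_le {x y : A} (hx : x ∈ P) (hy : y ∈ P) : span R {x, y} ≤ P := by
    simp [span_le, Set.insert_subset_iff, hx, hy]
  have aa_mem : a * a ∈ P := span_pair_le one_mem a_mem ha
  have bb_mem : b * b ∈ P := span_pair_le one_mem b_mem hb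
  have mul_b : ∀ y ∈ P, y * b ∈ P := maps_to (f := LinearMap.mulRight R b)
    (by simpa using b_mem) ab_mem bb_mem
    (by simpa [mul_assoc] using
      span_pair_le a_mem ab_mem (mul_mem_span_pair_of_mem_span_one_pair a hb))
  have a_mul : ∀ y ∈ P, a * y ∈ P := maps_to (f := LinearMap.mulLeft R a)
    (by simpa using a_mem) aa_mem ab_mem
    (by simpa [mul_assoc] using
      span_pair_le b_mem ab_mem (mul_mem_span_pair_of_mem_span_one_pair' b ha))
  have b_mul : ∀ y ∈ P, b * y ∈ P := maps_to (f := LinearMap.mulLeft R b)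
    (by simpa using b_mem) hba bb_mem (by simpa [mul_assoc] using mul_b _ hba)
  refine le_antisymm (fun x hx ↦ ?_) (span_le.mpr ?_)
  · suffices ∀ y ∈ P, x * y ∈ P by simpa using this 1 one_mem
    induction hx using Algebra.adjoin_induction with
    | mem x hx => rcases hx with rfl | rfl <;> assumption
    | algebraMap r => simpa [Algebra.algebraMap_eq_smul_one] using fun y hy ↦ P.smul_mem r hy
    | add x y _ _ hx hy => exact fun z hz ↦ by simpa [add_mul] using P.add_mem (hx z hz) (hy z hz)
    | mul x y _ _ hx hy => exact fun z hz ↦ by simpa [mul_assoc] using hx _ (hy z hz)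
  · have ha' : a ∈ Algebra.adjoin R {a, b} := Algebra.subset_adjoin (by simp)
    have hb' : b ∈ Algebra.adjoin R {a, b} := Algebra.subset_adjoin (by simp)
    simp [Set.insert_subset_iff, ha', hb', Subalgebra.mul_mem _ ha' hb']

end QuadraticPair

namespace Matrix

variable {R : Type*} [CommRing R]

theorem mul_self_fin_two (A : Matrix (Fin 2) (Fin 2) R) : A * A = trace A • A - det A • 1 := by
  ext i j
  fin_cases i <;> fin_cases j <;> simp [mul_apply, trace_fin_two, det_fin_two] <;> ring

theorem mul_add_mul_swap_fin_two (A B : Matrix (Fin 2) (Fin 2) R) :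
    A * B + B * A = trace A • B + trace B • A + (trace (A * B) - trace A * trace B) • 1 := by
  ext i j
  fin_cases i <;> fin_cases j <;> simp [mul_apply, trace_fin_two] <;> ring

theorem mul_self_mem_span_one_fin_two (A : Matrix (Fin 2) (Fin 2) R) : A * A ∈ span R {1, A} :=
  mem_span_pair.mpr ⟨-det A, trace A, by rw [mul_self_fin_two]; module⟩

theorem mul_swap_mem_span_fin_two (A B : Matrix (Fin 2) (Fin 2) R) :
    B * A ∈ span R {1, A, B, A * B} := by
  have mem {X : Matrix (Fin 2) (Fin 2) R} (hX : X ∈ ({1, A, B, A * B} : Set _)) :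
      X ∈ span R {1, A, B, A * B} := subset_span hX
  rw [eq_sub_of_add_eq' (mul_add_mul_swap_fin_two A B)]
  exact sub_mem (add_mem (add_mem (smul_mem _ _ (mem (by simp))) (smul_mem _ _ (mem (by simp))))
    (smul_mem _ _ (mem (by simp)))) (mem (by simp))

noncomputable def finTwoEntryBasis : Module.Basis (Fin 4) R (Matrix (Fin 2) (Fin 2) R) :=
  .ofEquivFun
    { toFun X := ![X 0 0, X 0 1, X 1 0, X 1 1]
      invFun y := !![y 0, y 1; y 2, y 3]
      map_add' X Y := by ext i; fin_cases i <;> simp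
      map_smul' c X := by ext i; fin_cases i <;> simp
      left_inv X := by ext i j; fin_cases i <;> fin_cases j <;> simp
      right_inv y := by ext i; fin_cases i <;> simp }

theorem finTwoEntryBasis_det (A B : Matrix (Fin 2) (Fin 2) R) :
    finTwoEntryBasis.det ![1, A, B, A * B] = det (A * B - B * A) := by
  rw [Module.Basis.det_apply, det_succ_row_zero]
  simp only [Fin.sum_univ_succ, det_succ_row_zero]
  simp [Module.Basis.toMatrix_apply, finTwoEntryBasis, mul_apply, Fin.succAbove]
  ring

end Matrix

theorem stmt_15 {S : Type*} [CommRing S] (A B : Matrix (Fin 2) (Fin 2) S) :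
    Algebra.adjoin S {A, B} = ⊤ ↔ IsUnit (A * B - B * A).det := by
  have range_eq : Set.range ![1, A, B, A * B] = {1, A, B, A * B} := by
    ext; simp; tauto
  rw [← Algebra.toSubmodule_eq_top,
    Algebra.toSubmodule_adjoin_pair_eq_span (Matrix.mul_self_mem_span_one_fin_two A)
      (Matrix.mul_self_mem_span_one_fin_two B) (Matrix.mul_swap_mem_span_fin_two A B),
    ← range_eq, Matrix.finTwoEntryBasis.span_range_eq_top_iff_isUnit_det,
    Matrix.finTwoEntryBasis_det]
end
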